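/- arXiv:2307.04380 — 7 statements merged into one kernel-verified Lean document; each statement's English description precedes it below -/
import Mathlib

section
/- In a Lambert quadrilateral argument: if a, D, R are positive reals satisfying sinh(a)·cosh(1/2) = sinh(2) and sinh(D) = sinh(a)·cosh(R − 1/2) with R > 1, then D ≥ R. -/
/-- Lambert quadrilateral estimate: if `a, D, R > 0` satisfy
`sinh a · cosh (1/2) = sinh 2` and `sinh D = sinh a · cosh (R − 1/2)` with `R > 1`,
then `D ≥ R`. -/
theorem lambert_quadrilateral_bound (a D R : ℝ) (ha : 0 < a) (hD : 0 < D) (hR : 1 < R)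
    (h1 : Real.sinh a * Real.cosh (1 / 2) = Real.sinh 2)
    (h2 : Real.sinh D = Real.sinh a * Real.cosh (R - 1 / 2)) :
    R ≤ D := by
  have hE1 : (2.7182818283 : ℝ) < Real.exp 1 := Real.exp_one_gt_d9
  have hE2 : Real.exp 1 < 2.7182818286 := Real.exp_one_lt_d9
  have hEpos : (0:ℝ) < Real.exp 1 := Real.exp_pos 1
  -- sinh a ≥ exp (1/2)
  have hexp2 : Real.exp 2 = Real.exp 1 * Real.exp 1 := by
    rw [← Real.exp_add]; norm_num
  have hexpneg2 : Real.exp (-2) = 1 / (Real.exp 1 * Real.exp 1) := by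
    rw [← hexp2, Real.exp_neg]; ring
  have hhalf : Real.exp (1/2) * Real.exp (1/2) = Real.exp 1 := by
    rw [← Real.exp_add]; norm_num
  have hhalfneg : Real.exp (-(1/2)) * Real.exp (1/2) = 1 := by
    rw [← Real.exp_add]; norm_num
  have hhpos : (0:ℝ) < Real.exp (1/2) := Real.exp_pos _
  have hkey : Real.exp (1/2) * Real.cosh (1/2) ≤ Real.sinh 2 := by
    rw [Real.cosh_eq, Real.sinh_eq, hexp2, hexpneg2]
    have hL : Real.exp (1/2) * ((Real.exp (1/2) + Real.exp (-(1/2)))/2)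
        = (Real.exp 1 + 1)/2 := by linear_combination hhalf/2 + hhalfneg/2
    rw [hL]
    have h6 : 1/(Real.exp 1 * Real.exp 1) ≤ 1 := by
      rw [div_le_one (by positivity)]
      nlinarith
    nlinarith
  have hcoshpos : (0:ℝ) < Real.cosh (1/2) := Real.cosh_pos _
  have hsa : Real.exp (1/2) ≤ Real.sinh a := by
    rw [← h1] at hkey
    exact le_of_mul_le_mul_right (by linarith [mul_comm (Real.sinh a) (Real.cosh (1/2))]) hcoshpos
  -- cosh (R - 1/2) ≥ exp (R - 1/2) / 2
  have hc : Real.exp (R - 1/2) / 2 ≤ Real.cosh (R - 1/2) := by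
    rw [Real.cosh_eq]
    have := Real.exp_pos (-(R - 1/2))
    linarith
  have hsinhR : Real.sinh R < Real.exp R / 2 := by
    rw [Real.sinh_eq]
    have := Real.exp_pos (-R)
    linarith
  have hprod : Real.exp (1/2) * (Real.exp (R - 1/2) / 2) = Real.exp R / 2 := by
    have h5 : Real.exp (1/2) * Real.exp (R - 1/2) = Real.exp R := by
      rw [← Real.exp_add]; ring_nf
    linarith
  have h3 : Real.exp R / 2 ≤ Real.sinh D := by
    rw [h2, ← hprod]
    have h4 : Real.exp (1/2) * (Real.exp (R - 1/2) / 2) ≤ Real.sinh a * Real.cosh (R - 1/2) := by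
      apply mul_le_mul hsa hc (by positivity) (by linarith)
    exact h4
  have : Real.sinh R < Real.sinh D := lt_of_lt_of_le hsinhR h3
  exact le_of_lt (Real.sinh_lt_sinh.mp this)
end

section
/- Let Γ act measure-preservingly on (X₀, μ₀) and (X₁, μ₁) with fundamental domains Δ₀ ⊆ X₀ and Δ₁ ⊆ X₁. Then for any nonnegative measurable F on X₀ × X₁ invariant under the diagonal Γ-action, ∫∫_{Δ₀ × X₁} F d(μ₀⊗μ₁) = ∫∫_{X₀ × Δ₁} F d(μ₀⊗μ₁). -/
open MeasureTheory Pointwise ENNReal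

section Aux

variable {Γ X : Type*} [Group Γ] [Countable Γ] [MulAction Γ X] [MeasurableSpace X]
  {μ : Measure X} {Δ : Set X}

lemma aux_cover {x : X}
    (h : ∑' γ : Γ, (γ • Δ).indicator (fun _ => (1 : ℝ≥0∞)) x = 1) : ∃ γ : Γ, γ • x ∈ Δ := by
  by_contra hc
  push_neg at hc
  have hz : ∀ γ : Γ, (γ • Δ).indicator (fun _ => (1 : ℝ≥0∞)) x = 0 := by
    intro γ
    apply Set.indicator_of_notMem
    intro hx
    exact hc γ⁻¹ ((Set.mem_smul_set_iff_inv_smul_mem).mp hx)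
  simp [hz] at h

lemma aux_disj
    (hΔ : ∀ᵐ x ∂μ, ∑' γ : Γ, (γ • Δ).indicator (fun _ => (1 : ℝ≥0∞)) x = 1)
    {γ δ : Γ} (hne : γ ≠ δ) : μ (γ • Δ ∩ δ • Δ) = 0 := by
  have h0 : μ {x | ¬ ∑' γ : Γ, (γ • Δ).indicator (fun _ => (1 : ℝ≥0∞)) x = 1} = 0 :=
    ae_iff.mp hΔ
  classical
  refine measure_mono_null ?_ h0
  intro x hx h1
  have h2 : (({γ, δ} : Finset Γ).sum fun g => (g • Δ).indicator (fun _ => (1 : ℝ≥0∞)) x)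
      ≤ ∑' g : Γ, (g • Δ).indicator (fun _ => (1 : ℝ≥0∞)) x := ENNReal.sum_le_tsum _
  rw [h1, Finset.sum_pair hne] at h2
  rw [Set.indicator_of_mem hx.1, Set.indicator_of_mem hx.2] at h2
  exact absurd h2 (by norm_num)

end Aux

/-- If `Γ` acts measure-preservingly on `(X₀, μ₀)` and `(X₁, μ₁)`, with fundamental
domains `Δ₀ ⊆ X₀` and `Δ₁ ⊆ X₁`, then for any nonnegative measurable `F` on `X₀ × X₁`
invariant under the diagonal action,
`∫∫_{Δ₀ × X₁} F = ∫∫_{X₀ × Δ₁} F` with respect to `μ₀ ⊗ μ₁`. -/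
theorem fundamental_domain_product_integral_eq {Γ X₀ X₁ : Type*} [Group Γ] [Countable Γ]
    [MulAction Γ X₀] [MulAction Γ X₁] [MeasurableSpace X₀] [MeasurableSpace X₁]
    (μ₀ : Measure X₀) (μ₁ : Measure X₁) [SigmaFinite μ₀] [SigmaFinite μ₁]
    (hp₀ : ∀ γ : Γ, MeasurePreserving (fun x => γ • x) μ₀ μ₀)
    (hp₁ : ∀ γ : Γ, MeasurePreserving (fun x => γ • x) μ₁ μ₁)
    (Δ₀ : Set X₀) (Δ₁ : Set X₁) (hΔ₀m : MeasurableSet Δ₀) (hΔ₁m : MeasurableSet Δ₁)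
    (hΔ₀ : ∀ᵐ x ∂μ₀, ∑' γ : Γ, (γ • Δ₀).indicator (fun _ => (1 : ℝ≥0∞)) x = 1)
    (hΔ₁ : ∀ᵐ x ∂μ₁, ∑' γ : Γ, (γ • Δ₁).indicator (fun _ => (1 : ℝ≥0∞)) x = 1)
    (F : X₀ × X₁ → ℝ≥0∞) (hF : Measurable F)
    (hinv : ∀ (γ : Γ) (x₀ : X₀) (x₁ : X₁), F (γ • x₀, γ • x₁) = F (x₀, x₁)) :
    ∫⁻ q in Δ₀ ×ˢ (Set.univ : Set X₁), F q ∂(μ₀.prod μ₁) =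
      ∫⁻ q in (Set.univ : Set X₀) ×ˢ Δ₁, F q ∂(μ₀.prod μ₁) := by
  letI : MeasurableSpace Γ := ⊤
  have hmp : ∀ γ : Γ, MeasurePreserving (fun q : X₀ × X₁ => γ • q) (μ₀.prod μ₁) (μ₀.prod μ₁) :=
    fun γ => (hp₀ γ).prod (hp₁ γ)
  haveI : MeasurableConstSMul Γ (X₀ × X₁) := ⟨fun γ => (hmp γ).measurable⟩
  haveI : MeasurableSMul Γ (X₀ × X₁) :=
    ⟨fun _ => measurable_from_top⟩
  haveI : SMulInvariantMeasure Γ (X₀ × X₁) (μ₀.prod μ₁) :=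
    ⟨fun γ s hs => (hmp γ).measure_preimage hs.nullMeasurableSet⟩
  have hsmul₀ : ∀ (γ : Γ) (s : Set X₀), MeasurableSet s → MeasurableSet (γ • s) := by
    intro γ s hs
    rw [show γ • s = (fun x => γ⁻¹ • x) ⁻¹' s by
      ext x; simp [Set.mem_smul_set_iff_inv_smul_mem]]
    exact (hp₀ γ⁻¹).measurable hs
  have hsmul₁ : ∀ (γ : Γ) (s : Set X₁), MeasurableSet s → MeasurableSet (γ • s) := by
    intro γ s hs
    rw [show γ • s = (fun x => γ⁻¹ • x) ⁻¹' s by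
      ext x; simp [Set.mem_smul_set_iff_inv_smul_mem]]
    exact (hp₁ γ⁻¹).measurable hs
  have hprod_smul : ∀ (γ : Γ) (s : Set X₀) (t : Set X₁),
      γ • (s ×ˢ t) = (γ • s) ×ˢ (γ • t) := by
    intro γ s t
    ext ⟨x, y⟩
    simp [Set.mem_smul_set_iff_inv_smul_mem, Prod.smul_def]
  have h₀ : IsFundamentalDomain Γ (Δ₀ ×ˢ (Set.univ : Set X₁)) (μ₀.prod μ₁) := by
    refine ⟨(hΔ₀m.prod MeasurableSet.univ).nullMeasurableSet, ?_, ?_⟩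
    · have := (Measure.quasiMeasurePreserving_fst (μ := μ₀) (ν := μ₁)).ae hΔ₀
      filter_upwards [this] with q hq
      obtain ⟨γ, hγ⟩ := aux_cover hq
      exact ⟨γ, hγ, Set.mem_univ _⟩
    · intro γ δ hne
      have heq : γ • (Δ₀ ×ˢ (Set.univ : Set X₁)) ∩ δ • (Δ₀ ×ˢ (Set.univ : Set X₁))
          = (γ • Δ₀ ∩ δ • Δ₀) ×ˢ (Set.univ : Set X₁) := by
        simp only [hprod_smul, Set.smul_set_univ]
        rw [Set.prod_inter_prod, Set.univ_inter]
      show μ₀.prod μ₁ (γ • Δ₀ ×ˢ Set.univ ∩ δ • Δ₀ ×ˢ Set.univ) = 0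
      rw [heq, Measure.prod_prod, aux_disj hΔ₀ hne, zero_mul]
  have h₁ : IsFundamentalDomain Γ ((Set.univ : Set X₀) ×ˢ Δ₁) (μ₀.prod μ₁) := by
    refine ⟨(MeasurableSet.univ.prod hΔ₁m).nullMeasurableSet, ?_, ?_⟩
    · have := (Measure.quasiMeasurePreserving_snd (μ := μ₀) (ν := μ₁)).ae hΔ₁
      filter_upwards [this] with q hq
      obtain ⟨γ, hγ⟩ := aux_cover hq
      exact ⟨γ, Set.mem_univ _, hγ⟩
    · intro γ δ hne
      have heq : γ • ((Set.univ : Set X₀) ×ˢ Δ₁) ∩ δ • ((Set.univ : Set X₀) ×ˢ Δ₁)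
          = (Set.univ : Set X₀) ×ˢ (γ • Δ₁ ∩ δ • Δ₁) := by
        simp only [hprod_smul, Set.smul_set_univ]
        rw [Set.prod_inter_prod, Set.univ_inter]
      show μ₀.prod μ₁ (γ • Set.univ ×ˢ Δ₁ ∩ δ • Set.univ ×ˢ Δ₁) = 0
      rw [heq, Measure.prod_prod, aux_disj hΔ₁ hne, mul_zero]
  exact h₀.setLIntegral_eq h₁ F fun γ q => hinv γ q.1 q.2
end

section
/- Let f be a continuous real-valued function on a topological space X and μ a Radon measure. If there is a real constant k such that for every exhausting sequence (Kₘ) of compact sets of X, lim_{m→∞} ∫_{Kₘ} f dμ = k, then f ∈ L¹(X, μ) and ∫_X f dμ = k. -/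
open MeasureTheory Filter

/-- On a compact set, the integral of `max f 0` equals the integral of `f`
over the intersection with `{x | 0 ≤ f x}`. -/
lemma setIntegral_posPart_eq {X : Type*} [TopologicalSpace X] [MeasurableSpace X] [BorelSpace X]
    (μ : Measure X) (f : X → ℝ) (hf : Continuous f) (s : Set X) (hs : MeasurableSet s) :
    ∫ x in s, max (f x) 0 ∂μ = ∫ x in s ∩ (f ⁻¹' Set.Ici 0), f x ∂μ := by
  have hC : MeasurableSet (f ⁻¹' Set.Ici 0) := (isClosed_Ici.preimage hf).measurableSet
  rw [← setIntegral_indicator hC]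
  refine setIntegral_congr_fun hs fun x _ => ?_
  by_cases h : 0 ≤ f x
  · simp [Set.indicator_of_mem, h, max_eq_left h]
  · simp [Set.indicator_of_notMem, h, max_eq_right (le_of_lt (not_le.mp h))]

/-- Key boundedness lemma: under the exhaustion-limit hypothesis, the integrals of the
positive part of `f` along any exhausting sequence are bounded above. -/
lemma posPart_integral_bounded {X : Type*} [TopologicalSpace X] [T2Space X]
    [LocallyCompactSpace X] [SigmaCompactSpace X] [MeasurableSpace X] [BorelSpace X]
    (μ : Measure X) [μ.Regular] (f : X → ℝ) (hf : Continuous f) (k : ℝ)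
    (hlim : ∀ K : ℕ → Set X, Monotone K → (∀ n, IsCompact (K n)) →
      (⋃ n, K n) = Set.univ →
      Tendsto (fun n => ∫ x in K n, f x ∂μ) atTop (nhds k))
    (L : ℕ → Set X) (hLm : Monotone L) (hLc : ∀ n, IsCompact (L n))
    (hLu : (⋃ n, L n) = Set.univ) :
    ∃ M : ℝ, ∀ n, ∫ x in L n, max (f x) 0 ∂μ ≤ M := by
  by_contra h
  push_neg at h
  set C : Set X := f ⁻¹' Set.Ici 0 with hCdef
  have hCclosed : IsClosed C := isClosed_Ici.preimage hf
  have hCmeas : MeasurableSet C := hCclosed.measurableSet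
  -- choose m n with large positive-part integral
  have hchoice : ∀ n : ℕ, ∃ m : ℕ,
      (n : ℝ) + ∫ x in L n, max (-f x) 0 ∂μ < ∫ x in L m, max (f x) 0 ∂μ := by
    intro n
    obtain ⟨m, hm⟩ := h ((n : ℝ) + ∫ x in L n, max (-f x) 0 ∂μ)
    exact ⟨m, hm⟩
  choose m hm using hchoice
  -- the modified exhaustion
  set K : ℕ → Set X := fun n => L n ∪ ⋃ i ∈ Finset.range (n + 1), (L (m i) ∩ C) with hKdef
  have hKc : ∀ n, IsCompact (K n) := by
    intro n
    refine (hLc n).union ?_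
    exact (Finset.range (n + 1)).isCompact_biUnion fun i _ =>
      (hLc (m i)).inter_right hCclosed
  have hInt : ∀ {g : X → ℝ}, Continuous g → ∀ {s : Set X}, IsCompact s → IntegrableOn g s μ :=
    fun hg _ hs => hg.continuousOn.integrableOn_compact hs
  have hKm : Monotone K := by
    intro a b hab
    refine Set.union_subset_union (hLm hab) ?_
    refine Set.iUnion₂_subset fun i hi => ?_
    refine Set.subset_biUnion_of_mem (u := fun i => L (m i) ∩ C) ?_
    have := Finset.mem_range.mp hi
    exact Finset.mem_range.mpr (by omega)
  have hKu : (⋃ n, K n) = Set.univ := by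
    apply Set.eq_univ_of_univ_subset
    rw [← hLu]
    exact Set.iUnion_mono fun n => Set.subset_union_left
  have hconv := hlim K hKm hKc hKu
  -- lower bound on the integrals over K n
  have hbound : ∀ n : ℕ, (n : ℝ) ≤ ∫ x in K n, f x ∂μ := by
    intro n
    have hKint : IntegrableOn f (K n) μ := hInt hf (hKc n)
    -- split the integral over C and Cᶜ
    have hsplit : ∫ x in K n, f x ∂μ
        = (∫ x in K n ∩ C, f x ∂μ) + ∫ x in K n ∩ Cᶜ, f x ∂μ := by
      rw [← integral_add_compl hCmeas hKint, Measure.restrict_restrict hCmeas,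
        Measure.restrict_restrict hCmeas.compl, Set.inter_comm C, Set.inter_comm Cᶜ]
    -- K n ∩ Cᶜ = L n ∩ Cᶜ
    have hKCc : K n ∩ Cᶜ = L n ∩ Cᶜ := by
      ext x
      simp only [hKdef, Set.mem_inter_iff, Set.mem_union, Set.mem_iUnion, Set.mem_compl_iff]
      constructor
      · rintro ⟨h1 | h1, h2⟩
        · exact ⟨h1, h2⟩
        · obtain ⟨i, -, -, hiC⟩ := h1
          exact absurd hiC h2
      · rintro ⟨h1, h2⟩; exact ⟨Or.inl h1, h2⟩
    -- first piece: ≥ ∫_{L (m n)} f⁺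
    have hsub : L (m n) ∩ C ⊆ K n ∩ C := by
      intro x hx
      refine ⟨Or.inr (Set.mem_biUnion ?_ hx), hx.2⟩
      exact Finset.self_mem_range_succ n
    have h1 : ∫ x in L (m n), max (f x) 0 ∂μ ≤ ∫ x in K n ∩ C, f x ∂μ := by
      rw [setIntegral_posPart_eq μ f hf _ (hLc _).measurableSet]
      exact setIntegral_mono_set (hInt hf ((hKc n).inter_right hCclosed) |>.mono_set le_rfl)
        (ae_restrict_of_forall_mem ((hKc n).measurableSet.inter hCmeas) fun x hx => hx.2)
        (HasSubset.Subset.eventuallyLE hsub)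
    -- second piece: ≥ - ∫_{L n} (−f)⁺
    have h2 : -(∫ x in L n, max (-f x) 0 ∂μ) ≤ ∫ x in K n ∩ Cᶜ, f x ∂μ := by
      rw [hKCc]
      have heq : ∫ x in L n ∩ Cᶜ, f x ∂μ = -∫ x in L n ∩ Cᶜ, max (-f x) 0 ∂μ := by
        rw [← integral_neg]
        refine setIntegral_congr_fun ((hLc n).measurableSet.inter hCmeas.compl) fun x hx => ?_
        have : f x < 0 := by
          have := hx.2
          simp only [hCdef, Set.mem_compl_iff, Set.mem_preimage, Set.mem_Ici, not_le] at this
          exact this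
        simp [max_eq_left (neg_nonneg.mpr this.le)]
      rw [heq, neg_le_neg_iff]
      exact setIntegral_mono_set (hInt (hf.neg.max continuous_const) (hLc n))
        (ae_restrict_of_forall_mem (hLc n).measurableSet fun x _ => le_max_right _ _)
        (HasSubset.Subset.eventuallyLE Set.inter_subset_left)
    rw [hsplit]
    linarith [hm n]
  have htop : Tendsto (fun n => ∫ x in K n, f x ∂μ) atTop atTop :=
    tendsto_atTop_mono hbound tendsto_natCast_atTop_atTop
  exact not_tendsto_nhds_of_tendsto_atTop htop k hconv

/-- If `f` is continuous on a locally compact σ-compact Hausdorff space with a Radon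
measure `μ`, and there is `k ∈ ℝ` such that `∫_{Kₘ} f dμ → k` for every exhausting
sequence of compacts `(Kₘ)`, then `f ∈ L¹(X, μ)` and `∫_X f dμ = k`. -/
theorem integrable_of_exhaustion_limit {X : Type*} [TopologicalSpace X] [T2Space X]
    [LocallyCompactSpace X] [SigmaCompactSpace X] [MeasurableSpace X] [BorelSpace X]
    (μ : Measure X) [μ.Regular] (f : X → ℝ) (hf : Continuous f) (k : ℝ)
    (hlim : ∀ K : ℕ → Set X, Monotone K → (∀ n, IsCompact (K n)) →
      (⋃ n, K n) = Set.univ →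
      Tendsto (fun n => ∫ x in K n, f x ∂μ) atTop (nhds k)) :
    Integrable f μ ∧ ∫ x, f x ∂μ = k := by
  obtain ⟨L⟩ : Nonempty (CompactExhaustion X) := ⟨CompactExhaustion.choice X⟩
  have hLm : Monotone (fun n => L n) := fun a b hab => L.subset hab
  have hLc : ∀ n, IsCompact (L n) := L.isCompact
  have hLu : (⋃ n, L n) = Set.univ := L.iUnion_eq
  have hInt : ∀ {g : X → ℝ}, Continuous g → ∀ {s : Set X}, IsCompact s → IntegrableOn g s μ :=
    fun hg _ hs => hg.continuousOn.integrableOn_compact hs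
  -- bounded positive part
  obtain ⟨M₁, hM₁⟩ := posPart_integral_bounded μ f hf k hlim (fun n => L n) hLm hLc hLu
  -- bounded negative part, from applying the lemma to `-f`
  have hlim' : ∀ K : ℕ → Set X, Monotone K → (∀ n, IsCompact (K n)) →
      (⋃ n, K n) = Set.univ →
      Tendsto (fun n => ∫ x in K n, -f x ∂μ) atTop (nhds (-k)) := by
    intro K h1 h2 h3
    simpa [integral_neg] using (hlim K h1 h2 h3).neg
  obtain ⟨M₂, hM₂⟩ := posPart_integral_bounded μ (fun x => -f x) hf.neg (-k) hlim'
    (fun n => L n) hLm hLc hLu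
  -- the AECover
  have hcover : AECover μ atTop (fun n => L n) := by
    refine ⟨?_, fun n => (hLc n).measurableSet⟩
    refine ae_of_all _ fun x => ?_
    have : x ∈ ⋃ n, L n := hLu ▸ Set.mem_univ x
    obtain ⟨n, hn⟩ := Set.mem_iUnion.mp this
    exact eventually_atTop.mpr ⟨n, fun b hb => hLm hb hn⟩
  -- bound on ∫ ‖f‖
  have hnorm : ∀ n, ∫ x in L n, ‖f x‖ ∂μ ≤ M₁ + M₂ := by
    intro n
    have habs : ∀ x : X, ‖f x‖ = max (f x) 0 + max (-f x) 0 := by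
      intro x
      rcases le_or_gt 0 (f x) with h | h
      · simp [Real.norm_of_nonneg h, max_eq_left h, max_eq_right (neg_nonpos.mpr h)]
      · rw [Real.norm_of_nonpos h.le, max_eq_right h.le, max_eq_left (neg_nonneg.mpr h.le)]
        ring
    calc ∫ x in L n, ‖f x‖ ∂μ
        = ∫ x in L n, (max (f x) 0 + max (-f x) 0) ∂μ := by
          exact setIntegral_congr_fun (hLc n).measurableSet fun x _ => habs x
      _ = (∫ x in L n, max (f x) 0 ∂μ) + ∫ x in L n, max (-f x) 0 ∂μ := by
          refine integral_add ?_ ?_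
          · exact hInt (hf.max continuous_const) (hLc n)
          · exact hInt (hf.neg.max continuous_const) (hLc n)
      _ ≤ M₁ + M₂ := add_le_add (hM₁ n) (hM₂ n)
  have hint : Integrable f μ :=
    hcover.integrable_of_integral_norm_bounded (M₁ + M₂)
      (fun n => hInt hf (hLc n)) (Eventually.of_forall hnorm)
  exact ⟨hint, hcover.integral_eq_of_tendsto k hint (hlim (fun n => L n) hLm hLc hLu)⟩
end

section
/- Let A be a (possibly non-associative up to Leibniz) algebra with a bilinear antisymmetric bracket satisfying the Jacobi identity and the Leibniz rule [a, bc] = [a,b]c + b[a,c], and suppose its elements g are invertible where needed. Define ∂_g(z) = (1/g)·[g, z]. Then ∂_g is a derivation, and [∂_g, ∂_h] = ad([ℓ_g, ℓ_h]) where [ℓ_g, ℓ_h] := (1/(gh))[g,h]; concretely, ∂_g∂_h(z) − ∂_h∂_g(z) = [ (1/(gh))·[g,h], z ] for all z. -/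
/-- In a commutative Poisson algebra (antisymmetric bilinear bracket satisfying Jacobi
and Leibniz), with `g`, `h` invertible, the logarithmic derivative
`∂_g(z) = g⁻¹·[g, z]` is a derivation, and
`∂_g∂_h(z) − ∂_h∂_g(z) = [(gh)⁻¹·[g,h], z]` for all `z`. -/
theorem log_derivative_bracket {A : Type*} [CommRing A] (br : A → A → A)
    (hadd : ∀ a b c : A, br (a + b) c = br a c + br b c)
    (hanti : ∀ a b : A, br a b = -br b a)
    (hjac : ∀ a b c : A, br a (br b c) + br b (br c a) + br c (br a b) = 0)
    (hleib : ∀ a b c : A, br a (b * c) = br a b * c + b * br a c)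
    (g h : A) (hg : IsUnit g) (hh : IsUnit h) :
    (∀ z w : A, Ring.inverse g * br g (z * w) =
        (Ring.inverse g * br g z) * w + z * (Ring.inverse g * br g w)) ∧
    (∀ z : A, Ring.inverse g * br g (Ring.inverse h * br h z) -
        Ring.inverse h * br h (Ring.inverse g * br g z) =
      br (Ring.inverse (g * h) * br g h) z) := by
  have hone : ∀ a : A, br a 1 = 0 := by
    intro a
    have h1 := hleib a 1 1
    rw [one_mul] at h1
    linear_combination -h1
  have hleft : ∀ a b c : A, br (a * b) c = br a c * b + a * br b c := by
    intro a b c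
    rw [hanti, hleib, hanti c a, hanti c b]; ring
  have hinv : ∀ a k : A, IsUnit k →
      br a (Ring.inverse k) = -(Ring.inverse k * br a k * Ring.inverse k) := by
    intro a k hk
    have h0 : br a (k * Ring.inverse k) = 0 := by
      rw [Ring.mul_inverse_cancel k hk, hone]
    rw [hleib] at h0
    have hk' : Ring.inverse k * k = 1 := Ring.inverse_mul_cancel k hk
    have h2 := congrArg (fun x => Ring.inverse k * x) h0
    simp only [mul_add, ← mul_assoc, hk', one_mul, mul_zero] at h2
    linear_combination h2
  constructor
  · intro z w
    rw [hleib]; ring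
  · intro z
    have hzero : ∀ a : A, br 0 a = 0 := by
      intro a
      have h1 := hadd 0 0 a
      rw [add_zero] at h1
      linear_combination -h1
    have hnegl : ∀ a b : A, br (-a) b = -br a b := by
      intro a b
      have h1 := hadd a (-a) b
      rw [add_neg_cancel, hzero] at h1
      linear_combination -h1
    have hneg : ∀ a b : A, br a (-b) = -br a b := by
      intro a b
      rw [hanti, hnegl, hanti b a]; ring
    have hjacobi : br g (br h z) = br h (br g z) + br (br g h) z := by
      have j := hjac g h z
      rw [hanti z g, hneg h (br g z), hanti z (br g h)] at j
      linear_combination j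
    rw [Ring.mul_inverse_rev' (Commute.all g h)]
    rw [hleib g (Ring.inverse h) (br h z), hleib h (Ring.inverse g) (br g z)]
    rw [hinv g h hh, hinv h g hg]
    rw [hleft (Ring.inverse h * Ring.inverse g) (br g h) z]
    rw [hleft (Ring.inverse h) (Ring.inverse g) z]
    rw [hanti (Ring.inverse h) z, hanti (Ring.inverse g) z]
    rw [hinv z g hg, hinv z h hh]
    rw [hjacobi, hanti h g, hanti z g, hanti z h]
    ring
end

section
/- Let P be a set with a linking number ε : P⁴ → A (A a commutative ring) satisfying: ε(Xx,Yy) + ε(Xx,yY) = 0, ε(Xx,Yy) + ε(Yy,Xx) = 0, ε(zy,XY) + ε(zy,YZ) + ε(zy,ZX) = 0, and ε(Xx,Yy)·ε(Xy,Yx) = 0. Then for any six points X, x, Z, z, Y, y of P: ε(Xy,Zz) + ε(Yx,Zz) = ε(Xx,Zz) + ε(Yy,Zz). -/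
/-- The hexagonal relation for a linking number `ε` on a set `P`:
`ε(Xy,Zz) + ε(Yx,Zz) = ε(Xx,Zz) + ε(Yy,Zz)`. -/
theorem linking_number_hexagonal {P A : Type*} [CommRing A] (ε : P → P → P → P → A)
    (h1 : ∀ X x Y y : P, ε X x Y y + ε X x y Y = 0)
    (h2 : ∀ X x Y y : P, ε X x Y y + ε Y y X x = 0)
    (h3 : ∀ z y X Y Z : P, ε z y X Y + ε z y Y Z + ε z y Z X = 0)
    (h4 : ∀ X x Y y : P, ε X x Y y * ε X y Y x = 0)
    (X x Z z Y y : P) :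
    ε X y Z z + ε Y x Z z = ε X x Z z + ε Y y Z z := by
  have a1 := h3 Z z X y x
  have a2 := h3 Z z Y x y
  have b1 := h1 Z z x y
  have b2 := h1 Z z X x
  have b3 := h1 Z z Y y
  have c1 := h2 X y Z z
  have c2 := h2 Y x Z z
  have c3 := h2 X x Z z
  have c4 := h2 Y y Z z
  linear_combination c1 + c2 - c3 - c4 - a1 - a2 + b1 + b2 + b3
end

section
/- Let ε be a linking number on a set P (satisfying the axioms above). If X, x, Y, y, Z, z are points with {X,x} ∩ {Y,y} ∩ {Z,z} = ∅, then ε(Xx,Yy)·ε(Xy,Zz) + ε(Zz,Xx)·ε(Zx,Yy) + ε(Yy,Zz)·ε(Yz,Xx) = 0. -/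
/-- The quadratic hexagonal relation for a linking number `ε`: if
`{X,x} ∩ {Y,y} ∩ {Z,z} = ∅`, then
`ε(Xx,Yy)ε(Xy,Zz) + ε(Zz,Xx)ε(Zx,Yy) + ε(Yy,Zz)ε(Yz,Xx) = 0`. -/
theorem linking_number_hexagonal_quadratic {P A : Type*} [CommRing A]
    (ε : P → P → P → P → A)
    (h1 : ∀ X x Y y : P, ε X x Y y + ε X x y Y = 0)
    (h2 : ∀ X x Y y : P, ε X x Y y + ε Y y X x = 0)
    (h3 : ∀ z y X Y Z : P, ε z y X Y + ε z y Y Z + ε z y Z X = 0)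
    (h4 : ∀ X x Y y : P, ε X x Y y * ε X y Y x = 0)
    (X x Y y Z z : P)
    (hdisj : ({X, x} : Set P) ∩ {Y, y} ∩ {Z, z} = ∅) :
    ε X x Y y * ε X y Z z + ε Z z X x * ε Z x Y y + ε Y y Z z * ε Y z X x = 0 := by
  -- additivity in the second pair
  have add2 : ∀ a b c d e : P, ε a b c d = ε a b c e + ε a b e d := fun a b c d e => by
    linear_combination h1 a b c d - h3 a b c e d
  -- additivity in the first pair
  have add1 : ∀ a b c d e : P, ε a b c d = ε a e c d + ε e b c d := fun a b c d e => by
    linear_combination h2 a b c d - add2 c d a b e - h2 a e c d - h2 e b c d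
  -- degenerate vanishing
  have zero2 : ∀ a b c : P, ε a b c c = 0 := fun a b c => by
    linear_combination -(add2 a b c c c)
  have zero1 : ∀ a c d : P, ε a a c d = 0 := fun a c d => by
    linear_combination h2 a a c d - zero2 c d a
  -- first-pair antisymmetry
  have anti1 : ∀ a b c d : P, ε a b c d + ε b a c d = 0 := fun a b c d => by
    linear_combination h2 a b c d + h2 b a c d - h1 c d a b
  -- coboundary representation with basepoint `X`
  have rep : ∀ a b c d : P,
      ε a b c d = ε a X c X - ε a X d X - ε b X c X + ε b X d X := fun a b c d => by
    linear_combination add2 a b c d X + add1 a b c X X + anti1 X b c X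
      + h1 a b X d - add1 a b d X X - anti1 X b d X
  have e1 : ε X x Y y = -ε x X Y X + ε x X y X := by linear_combination rep X x Y y + zero1 X Y X - zero1 X y X
  have e2 : ε X y Z z = -ε y X Z X + ε y X z X := by linear_combination rep X y Z z + zero1 X Z X - zero1 X z X
  have e3 : ε Z z X x = -ε Z X x X + ε z X x X := by linear_combination rep Z z X x + zero2 Z X X - zero2 z X X
  have e4 : ε Z x Y y = ε Z X Y X - ε Z X y X - ε x X Y X + ε x X y X := by linear_combination rep Z x Y y
  have e5 : ε Y y Z z = ε Y X Z X - ε Y X z X - ε y X Z X + ε y X z X := by linear_combination rep Y y Z z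
  have e6 : ε Y z X x = -ε Y X x X + ε z X x X := by linear_combination rep Y z X x + zero2 Y X X - zero2 z X X
  have e7 : ε X x Y Z = -ε x X Y X + ε x X Z X := by linear_combination rep X x Y Z + zero1 X Y X - zero1 X Z X
  have e8 : ε X Z Y x = -ε Z X Y X + ε Z X x X := by linear_combination rep X Z Y x + zero1 X Y X - zero1 X x X
  have e9 : ε X x Y z = -ε x X Y X + ε x X z X := by linear_combination rep X x Y z + zero1 X Y X - zero1 X z X
  have e10 : ε X z Y x = -ε z X Y X + ε z X x X := by linear_combination rep X z Y x + zero1 X Y X - zero1 X x X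
  have e11 : ε X x y Z = -ε x X y X + ε x X Z X := by linear_combination rep X x y Z + zero1 X y X - zero1 X Z X
  have e12 : ε X Z y x = -ε Z X y X + ε Z X x X := by linear_combination rep X Z y x + zero1 X y X - zero1 X x X
  have e13 : ε X x y z = -ε x X y X + ε x X z X := by linear_combination rep X x y z + zero1 X y X - zero1 X z X
  have e14 : ε X z y x = -ε z X y X + ε z X x X := by linear_combination rep X z y x + zero1 X y X - zero1 X x X
  have q1 := h4 X x Y Z
  have q2 := h4 X x Y z
  have q3 := h4 X x y Z
  have q4 := h4 X x y z
  rw [e7, e8] at q1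
  rw [e9, e10] at q2
  rw [e11, e12] at q3
  rw [e13, e14] at q4
  rw [e1, e2, e3, e4, e5, e6]
  have fYx : ε Y X x X = -ε x X Y X := by linear_combination h2 Y X x X
  have fZY : ε Z X Y X = -ε Y X Z X := by linear_combination h2 Z X Y X
  have fZy : ε Z X y X = -ε y X Z X := by linear_combination h2 Z X y X
  have fZx : ε Z X x X = -ε x X Z X := by linear_combination h2 Z X x X
  have fzY : ε z X Y X = -ε Y X z X := by linear_combination h2 z X Y X
  have fzy : ε z X y X = -ε y X z X := by linear_combination h2 z X y X
  have fzx : ε z X x X = -ε x X z X := by linear_combination h2 z X x X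
  simp only [fYx, fZY, fZy, fZx, fzY, fzy, fzx] at q1 q2 q3 q4 ⊢
  linear_combination -q1 + q2 + q3 - q4
end

section
/- Intersection cocycle property: let ε be the intersection number of oriented geodesics in the hyperbolic plane (valued in {−1, −1/2, 0, 1/2, 1} as defined by the orientation conventions). If g₀, g₁, g₂ are the three sides of an ideal triangle with the induced boundary orientation, then for every oriented geodesic g: ε(g, g₀) + ε(g, g₁) + ε(g, g₂) = 0. -/
/-- `(p, q, r, s)` is a positively oriented (cyclically ordered) quadruple. -/
def Oriented4 {P : Type*} [CircularOrder P] (p q r s : P) : Prop :=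
  sbtw p q r ∧ sbtw p r s

/-- The intersection number of the oriented geodesic from `a` to `b` with the oriented
geodesic from `c` to `d`, where the boundary circle is modelled by a circular order.
It is `±1` for transverse crossings according to the cyclic orientation of the four
endpoints, `±1/2` when exactly one endpoint is shared, and `0` otherwise. -/
noncomputable def geodInter {P : Type*} [CircularOrder P] (a b c d : P) : ℚ :=
  open scoped Classical in
  if a = c ∧ b = d then 0
  else if a = b ∨ c = d then 0
  else if Oriented4 b d a c then 1
  else if Oriented4 b c a d then -1
  else if a = c then (if sbtw b d a then 1/2 else if sbtw d b a then -1/2 else 0)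
  else if b = d then (if sbtw a c b then 1/2 else if sbtw c a b then -1/2 else 0)
  else if b = c then (if sbtw d a b then 1/2 else if sbtw a d b then -1/2 else 0)
  else if a = d then (if sbtw c b a then 1/2 else if sbtw b c a then -1/2 else 0)
  else 0

section Aux

variable {P : Type*} [CircularOrder P]

private lemma sbtw_asymm' {a u v : P} (h : sbtw a u v) : ¬ sbtw a v u :=
  fun h' => sbtw_asymm h h'.cyclic_left

private lemma tricho {a u v : P} (hau : a ≠ u) (hav : a ≠ v) (huv : u ≠ v) :
    sbtw a u v ∨ sbtw a v u := by
  rcases btw_total a u v with h | h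
  · exact Or.inl (h.sbtw_of_not_btw fun h' =>
      (btw_antisymm h h').elim hau fun h'' => h''.elim huv fun e => hav e.symm)
  · exact Or.inr (h.cyclic_left.cyclic_left.sbtw_of_not_btw fun h' =>
      (btw_antisymm h.cyclic_left.cyclic_left h').elim hav fun h'' =>
        h''.elim (fun e => huv e.symm) fun e => hau e.symm)

/-- position sign of `e` relative to the oriented geodesic `(a, b)`. -/
private noncomputable def sgn (a b e : P) : ℚ :=
  open scoped Classical in
  if e = a ∨ e = b then 0 else if sbtw a e b then -1 else 1

private lemma geodInter_eq (a b c d : P) (hab : a ≠ b) (hcd : c ≠ d) :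
    geodInter a b c d = (sgn a b d - sgn a b c) / 2 := by
  rcases eq_or_ne a c with rfl | hac
  · -- c = a
    rcases eq_or_ne b d with rfl | hbd
    · norm_num [geodInter, sgn]
    · have hda : d ≠ a := fun e => hcd e.symm
      rcases tricho hab hcd hbd with hP1 | hP3
      · have h1 : sbtw b d a := hP1.cyclic_left
        have n3 : ¬ sbtw a d b := sbtw_asymm' hP1
        norm_num [geodInter, Oriented4, sgn, hab, hcd, hbd, Ne.symm hbd, hda, h1, n3,
          sbtw_irrefl_right, sbtw_irrefl_left, sbtw_irrefl_left_right]
      · have h2 : sbtw d b a := hP3.cyclic_left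
        have n1 : ¬ sbtw b d a := fun h => sbtw_asymm' hP3 h.cyclic_right
        norm_num [geodInter, Oriented4, sgn, hab, hcd, hbd, Ne.symm hbd, hda, h2, n1, hP3,
          sbtw_irrefl_right, sbtw_irrefl_left, sbtw_irrefl_left_right]
  rcases eq_or_ne b c with rfl | hbc
  · -- c = b
    rcases eq_or_ne a d with rfl | had
    · norm_num [geodInter, Oriented4, sgn, hab, Ne.symm hab,
        sbtw_irrefl_right, sbtw_irrefl_left, sbtw_irrefl_left_right]
    · rcases tricho hab had hcd with hP1 | hP3
      · have p : sbtw d a b := hP1.cyclic_right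
        have n3 : ¬ sbtw a d b := sbtw_asymm' hP1
        norm_num [geodInter, Oriented4, sgn, hab, hcd, had, Ne.symm had, Ne.symm hcd, p, n3,
          sbtw_irrefl_right, sbtw_irrefl_left, sbtw_irrefl_left_right]
      · have n : ¬ sbtw d a b := fun h => sbtw_asymm' hP3 h.cyclic_left
        norm_num [geodInter, Oriented4, sgn, hab, hcd, had, Ne.symm had, Ne.symm hcd, n, hP3,
          sbtw_irrefl_right, sbtw_irrefl_left, sbtw_irrefl_left_right]
  rcases eq_or_ne a d with rfl | had
  · -- d = a
    rcases tricho hac hab (Ne.symm hbc) with hP2 | hP4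
    · have q : sbtw c b a := hP2.cyclic_left
      norm_num [geodInter, Oriented4, sgn, hab, Ne.symm hab, hac, Ne.symm hac, hbc,
        Ne.symm hbc, q, hP2, sbtw_irrefl_right, sbtw_irrefl_left, sbtw_irrefl_left_right]
    · have n : ¬ sbtw c b a := fun h => sbtw_asymm' hP4 h.cyclic_right
      have q : sbtw b c a := hP4.cyclic_left
      have n2 : ¬ sbtw a c b := sbtw_asymm' hP4
      norm_num [geodInter, Oriented4, sgn, hab, Ne.symm hab, hac, Ne.symm hac, hbc,
        Ne.symm hbc, n, q, n2, sbtw_irrefl_right, sbtw_irrefl_left, sbtw_irrefl_left_right]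
  rcases eq_or_ne b d with rfl | hbd
  · -- d = b
    rcases tricho hac hab (Ne.symm hbc) with hP2 | hP4
    · norm_num [geodInter, Oriented4, sgn, hab, hac, Ne.symm hac, hbc, Ne.symm hbc, hcd,
        Ne.symm hcd, hP2, sbtw_irrefl_right, sbtw_irrefl_left, sbtw_irrefl_left_right]
    · have n : ¬ sbtw a c b := sbtw_asymm' hP4
      have q : sbtw c a b := hP4.cyclic_right
      norm_num [geodInter, Oriented4, sgn, hab, hac, Ne.symm hac, hbc, Ne.symm hbc, hcd,
        Ne.symm hcd, n, q, sbtw_irrefl_right, sbtw_irrefl_left, sbtw_irrefl_left_right]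
  -- generic case
  rcases tricho hac hab (Ne.symm hbc) with hc | hc <;>
    rcases tricho hab had hbd with hd | hd
  · -- c before b, d after b : +1
    have o1a : sbtw b d a := hd.cyclic_left
    have o1b : sbtw b a c := hc.cyclic_right
    have n3 : ¬ sbtw a d b := sbtw_asymm' hd
    norm_num [geodInter, Oriented4, sgn, hab, hcd, hac, Ne.symm hac, hbc, Ne.symm hbc,
      had, Ne.symm had, hbd, Ne.symm hbd, o1a, o1b, n3, hc]
  · -- c before b, d before b : 0
    have n1 : ¬ sbtw b d a := fun h => sbtw_asymm' hd h.cyclic_right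
    have n2 : ¬ sbtw b c a := fun h => sbtw_asymm' hc h.cyclic_right
    norm_num [geodInter, Oriented4, sgn, hab, hcd, hac, Ne.symm hac, hbc, Ne.symm hbc,
      had, Ne.symm had, hbd, Ne.symm hbd, n1, n2, hc, hd]
  · -- c after b, d after b : 0
    have n1 : ¬ sbtw b a c := fun h => sbtw_asymm' hc h.cyclic_left
    have n2 : ¬ sbtw b a d := fun h => sbtw_asymm' hd h.cyclic_left
    have n3 : ¬ sbtw a c b := sbtw_asymm' hc
    have n4 : ¬ sbtw a d b := sbtw_asymm' hd
    norm_num [geodInter, Oriented4, sgn, hab, hcd, hac, Ne.symm hac, hbc, Ne.symm hbc,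
      had, Ne.symm had, hbd, Ne.symm hbd, n1, n2, n3, n4]
  · -- c after b, d before b : -1
    have n1 : ¬ sbtw b a c := fun h => sbtw_asymm' hc h.cyclic_left
    have o2a : sbtw b c a := hc.cyclic_left
    have o2b : sbtw b a d := hd.cyclic_right
    have n3 : ¬ sbtw a c b := sbtw_asymm' hc
    norm_num [geodInter, Oriented4, sgn, hab, hcd, hac, Ne.symm hac, hbc, Ne.symm hbc,
      had, Ne.symm had, hbd, Ne.symm hbd, n1, o2a, o2b, n3, hd]

end Aux

/-- Cocycle property of the intersection number: if `g₀, g₁, g₂` are the sides of an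
ideal triangle with vertices `x, y, z` (with the induced boundary orientation), then
for every oriented geodesic `g = (a, b)`:
`ε(g, g₀) + ε(g, g₁) + ε(g, g₂) = 0`. -/
theorem geodInter_triangle_cocycle {P : Type*} [CircularOrder P] (x y z : P)
    (hxy : x ≠ y) (hyz : y ≠ z) (hzx : z ≠ x) (a b : P) (hab : a ≠ b) :
    geodInter a b x y + geodInter a b y z + geodInter a b z x = 0 := by
  rw [geodInter_eq a b x y hab hxy, geodInter_eq a b y z hab hyz,
    geodInter_eq a b z x hab hzx]
  ring
end
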